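/- arXiv:0903.3342 — 2 statements merged into one kernel-verified Lean document; each statement's English description precedes it below -/
import Mathlib

section
/- For every n ≥ 1 and every k ≥ 1, Σ_{T ∈ T_k(n)} ∏_{v ∈ T} 1/(h_v · k^{h_v - 1}) = 1/n!, where T_k(n) is the set of k-ary trees with n vertices. -/
/-!
Removing the root of a `k`-ary tree with `n + 1` vertices leaves `k` subtrees whose sizes
`m₁, …, mₖ` sum to `n`, and the root contributes the factor `1 / ((n + 1) kⁿ)`. By strong
induction the weights of the trees with `m` vertices sum to `1 / m!`, so the weights of the trees
with `n + 1` vertices sum to `1 / ((n + 1) kⁿ) · ∑ₘ ∏ᵢ 1 / mᵢ!`, and the multinomial theorem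
`∑ₘ n! / ∏ᵢ mᵢ! = kⁿ` turns this into `1 / (n + 1)!`.
-/

/-- `k`-ary trees: each vertex has `k` linearly ordered (possibly empty) subtrees. -/
inductive KTree (k : ℕ) : Type
  | leaf : KTree k
  | node : (Fin k → KTree k) → KTree k

namespace KTree

/-- The number of vertices of a `k`-ary tree. -/
def size {k : ℕ} : KTree k → ℕ
  | leaf => 0
  | node c => (∑ i, size (c i)) + 1

/-- The multiset of hook lengths of a `k`-ary tree: the hook length of a vertex
is the number of its descendants, counting the vertex itself. -/
def hooks {k : ℕ} : KTree k → Multiset ℕ+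
  | leaf => 0
  | node c => ⟨(∑ i, size (c i)) + 1, Nat.succ_pos _⟩ ::ₘ ∑ i, hooks (c i)

end KTree

open Finset

lemma Finset.sum_piAntidiag_prod_inv_factorial {ι K : Type*} [DecidableEq ι] [Semifield K]
    [CharZero K] (s : Finset ι) (n : ℕ) :
    ∑ m ∈ s.piAntidiag n, ∏ i ∈ s, ((m i).factorial : K)⁻¹ = (#s : K) ^ n / n.factorial := by
  have multinomial := sum_pow_eq_sum_piAntidiag s (fun _ ↦ (1 : K)) n
  simp only [sum_const, nsmul_one, one_pow, prod_const_one, mul_one] at multinomial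
  rw [multinomial, sum_div]
  refine sum_congr rfl fun m hm ↦ ?_
  have hprod : ∏ i ∈ s, ((m i).factorial : K) ≠ 0 :=
    prod_ne_zero_iff.2 fun i _ ↦ Nat.cast_ne_zero.2 (Nat.factorial_ne_zero _)
  rw [eq_div_iff (Nat.cast_ne_zero.2 (Nat.factorial_ne_zero n)), ← (mem_piAntidiag.1 hm).1,
    ← Nat.multinomial_spec s m, Nat.cast_mul, Nat.cast_prod, prod_inv_distrib,
    inv_mul_cancel_left₀ hprod]

namespace KTree

variable {k : ℕ}

noncomputable instance : DecidableEq (KTree k) := Classical.decEq _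

lemma node_injective : Function.Injective (node : (Fin k → KTree k) → KTree k) :=
  fun _ _ h ↦ by injection h

lemma size_lt_size_node (c : Fin k → KTree k) (i : Fin k) : (c i).size < (node c).size :=
  Nat.lt_succ_of_le <|
    single_le_sum (f := fun j ↦ (c j).size) (fun _ _ ↦ Nat.zero_le _) (mem_univ i)

noncomputable def ofSizeLe (k : ℕ) : ℕ → Finset (KTree k)
  | 0 => {leaf}
  | n + 1 => insert leaf ((Fintype.piFinset fun _ ↦ ofSizeLe k n).image node)

lemma mem_ofSizeLe_of_size_le {t : KTree k} {n : ℕ} (h : t.size ≤ n) : t ∈ ofSizeLe k n := by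
  induction t generalizing n with
  | leaf => cases n <;> simp [ofSizeLe]
  | node c ih =>
    obtain ⟨n, rfl⟩ : ∃ m, n = m + 1 := Nat.exists_eq_add_one.2 (by simp only [size] at h; omega)
    refine mem_insert_of_mem (mem_image_of_mem _ (Fintype.mem_piFinset.2 fun i ↦ ih i ?_))
    have := size_lt_size_node c i
    omega

noncomputable def ofSize (k n : ℕ) : Finset (KTree k) :=
  (ofSizeLe k n).filter (·.size = n)

@[simp]
lemma mem_ofSize {t : KTree k} {n : ℕ} : t ∈ ofSize k n ↔ t.size = n :=
  ⟨fun h ↦ (mem_filter.1 h).2, fun h ↦ mem_filter.2 ⟨mem_ofSizeLe_of_size_le h.le, h⟩⟩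

lemma ofSize_zero : ofSize k 0 = {leaf} := by
  ext (_ | c) <;> simp [size]

lemma ofSize_succ (n : ℕ) :
    ofSize k (n + 1) = ((piAntidiag univ n).biUnion fun m ↦
      Fintype.piFinset fun i ↦ ofSize k (m i)).map ⟨node, node_injective⟩ := by
  ext (_ | c)
  · simp [size]
  · simp only [mem_ofSize, size, Nat.add_right_cancel_iff, mem_map, mem_biUnion,
      Fintype.mem_piFinset, mem_piAntidiag, mem_univ, implies_true, and_true,
      Function.Embedding.coeFn_mk, node.injEq, exists_eq_right]
    exact ⟨fun h ↦ ⟨_, h, fun _ ↦ rfl⟩, fun ⟨m, hm, hc⟩ ↦ by simpa only [hc] using hm⟩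

lemma sum_ofSize_succ {M : Type*} [AddCommMonoid M] (f : KTree k → M) (n : ℕ) :
    ∑ t ∈ ofSize k (n + 1), f t =
      ∑ m ∈ piAntidiag univ n, ∑ c ∈ Fintype.piFinset (fun i ↦ ofSize k (m i)), f (node c) := by
  rw [ofSize_succ, sum_map, sum_biUnion]
  · rfl
  intro m _ m' _ hne
  refine disjoint_left.2 fun c hc hc' ↦ hne (funext fun i ↦ ?_)
  rw [Fintype.mem_piFinset] at hc hc'
  exact (mem_ofSize.1 (hc i)).symm.trans (mem_ofSize.1 (hc' i))

-- The unfolded `hooks` builds its head as a bare subtype element, which `Multiset.map_cons`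
-- cannot match at type `ℕ+`; `succPNat` restores the type.
lemma hooks_node (c : Fin k → KTree k) :
    (node c).hooks = (∑ i, (c i).size).succPNat ::ₘ ∑ i, (c i).hooks :=
  rfl

noncomputable def weight (t : KTree k) : ℚ :=
  (t.hooks.map fun h : ℕ+ ↦ 1 / ((h : ℚ) * (k : ℚ) ^ ((h : ℕ) - 1))).prod

lemma weight_node (c : Fin k → KTree k) :
    weight (node c) =
      1 / ((((∑ i, (c i).size : ℕ) : ℚ) + 1) * (k : ℚ) ^ ∑ i, (c i).size) *
        ∏ i, weight (c i) := by
  rw [weight, hooks_node, Multiset.map_cons, Multiset.prod_cons,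
    ← Multiset.coe_mapAddMonoidHom, map_sum, Multiset.prod_sum]
  simp [weight]

theorem sum_weight_ofSize (hk : 0 < k) (n : ℕ) :
    ∑ t ∈ ofSize k n, weight t = 1 / (n.factorial : ℚ) := by
  induction n using Nat.strong_induction_on with | _ n ih =>
  rcases n with _ | n
  · simp [ofSize_zero, weight, hooks]
  have sum_subtrees : ∀ m ∈ piAntidiag univ n, ∀ i : Fin k,
      ∑ t ∈ ofSize k (m i), weight t = ((m i).factorial : ℚ)⁻¹ := fun m hm i ↦ by
    rw [ih _ (Nat.lt_succ_of_le ((mem_piAntidiag.1 hm).1 ▸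
      single_le_sum (fun _ _ ↦ Nat.zero_le _) (mem_univ i))), one_div]
  calc ∑ t ∈ ofSize k (n + 1), weight t
      = ∑ m ∈ piAntidiag univ n,
          1 / ((n + 1 : ℚ) * k ^ n) * ∏ i, ∑ t ∈ ofSize k (m i), weight t := by
        rw [sum_ofSize_succ]
        refine sum_congr rfl fun m hm ↦ ?_
        rw [prod_univ_sum, mul_sum]
        refine sum_congr rfl fun c hc ↦ ?_
        have hsize : ∑ i, (c i).size = n := by
          simp only [Fintype.mem_piFinset, mem_ofSize] at hc
          simpa only [hc] using (mem_piAntidiag.1 hm).1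
        rw [weight_node, hsize]
    _ = 1 / ((n + 1 : ℚ) * k ^ n) * ∑ m ∈ piAntidiag univ n, ∏ i, ((m i).factorial : ℚ)⁻¹ := by
        rw [mul_sum]
        exact sum_congr rfl fun m hm ↦ by simp only [sum_subtrees m hm]
    _ = 1 / ((n + 1).factorial : ℚ) := by
        rw [sum_piAntidiag_prod_inv_factorial, card_univ, Fintype.card_fin, Nat.factorial_succ]
        push_cast
        field_simp

end KTree

theorem hook_formula_kary_general (k n : ℕ) (hk : 1 ≤ k) :
    ∑ᶠ T : {t : KTree k // t.size = n},
      ((T : KTree k).hooks.map fun (h : ℕ+) =>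
        1 / ((h : ℚ) * (k : ℚ) ^ ((h : ℕ) - 1))).prod
    = 1 / (n.factorial : ℚ) := by
  change ∑ᶠ T : {t : KTree k // t.size = n}, KTree.weight (T : KTree k) = _
  rw [finsum_subtype_eq_finsum_cond, ← KTree.sum_weight_ofSize hk n,
    ← finsum_mem_coe_finset]
  simp only [mem_coe, KTree.mem_ofSize]

/-- The hook length formula of Han and Yang for `k`-ary trees. -/
theorem hook_formula_kary (k n : ℕ) (hk : 1 ≤ k) (hn : 1 ≤ n) :
    ∑ᶠ T : {t : KTree k // t.size = n},
      ((T : KTree k).hooks.map fun (h : ℕ+) =>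
        1 / ((h : ℚ) * (k : ℚ) ^ ((h : ℕ) - 1))).prod
    = 1 / (n.factorial : ℚ) :=
  hook_formula_kary_general k n hk
end

section
/- For every n ≥ 1, Σ_{T ∈ T(n)} ∏_{v ∈ T} 1/(h_v · B_{h_v − 1}) = 1, where T(n) is the set of labeled rooted trees on vertex set {1,...,n} and B_m is the m-th Bell number (the number of set partitions of an m-element set, with B_0 = 1). -/
/-- The parent relation associated to a parent map on `Fin n`. -/
def parentRel {n : ℕ} (p : Fin n → Option (Fin n)) : Fin n → Fin n → Prop :=
  fun a b => p a = some b

/-- A parent map on `{1, …, n}` is a (labeled rooted) forest if it has no cycles. -/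
def IsRForest {n : ℕ} (p : Fin n → Option (Fin n)) : Prop :=
  ∀ v, ¬ Relation.TransGen (parentRel p) v v

/-- A labeled rooted tree on `{1, …, n}`: an acyclic parent map with a unique root. -/
def IsRTree {n : ℕ} (p : Fin n → Option (Fin n)) : Prop :=
  IsRForest p ∧ ∃! r, p r = none

/-- The hook length of `v`: the number of descendants of `v`, counting `v` itself. -/
noncomputable def hookLen {n : ℕ} (p : Fin n → Option (Fin n)) (v : Fin n) : ℕ :=
  Nat.card {u : Fin n // Relation.ReflTransGen (parentRel p) u v}

lemma hookLen_pos {n : ℕ} (p : Fin n → Option (Fin n)) (v : Fin n) : 0 < hookLen p v :=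
  @Nat.card_pos _ ⟨⟨v, Relation.ReflTransGen.refl⟩⟩ _

/-- The hook length of `v` as a positive natural number. -/
noncomputable def hook {n : ℕ} (p : Fin n → Option (Fin n)) (v : Fin n) : ℕ+ :=
  ⟨hookLen p v, hookLen_pos p v⟩

/-- The `m`-th Bell number: the number of set partitions (equivalently, of
equivalence relations) of an `m`-element set. -/
noncomputable def bellNumber (m : ℕ) : ℕ := Nat.card (Setoid (Fin m))

/-!
Weight each rooted forest on a finite type `α` by `∏ᵥ 1 / (h_v B_{h_v - 1})`, and let `F(α)` and
`T(α)` be the total weights of all forests and of all trees on `α`; put `N = |α|`. Deleting the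
root of a tree leaves a forest on the other `N - 1` vertices with the same hook lengths, and the
root has hook length `N`, so `T(α) = N · F(N - 1) / (N B_{N-1})`. Cutting a forest into the tree
containing a fixed vertex `x` and the rest gives `F(α) = ∑_{S ∋ x} T(S) F(α \ S)`, which is the
recursion `B_N = ∑_{S ∋ x} B_{N - |S|}` obtained by taking `S` to be the block of `x`. By strong
induction on `N`, `F(α) = B_N` and `T(α) = 1`.
-/

namespace Setoid

open Finset

variable {α β : Type*}

instance [Finite α] : Finite (Setoid α) :=
  Finite.of_injective (fun s : Setoid α => ⇑s) fun _ _ => eq_iff_rel_eq.2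

theorem natCard_congr (e : α ≃ β) : Nat.card (Setoid α) = Nat.card (Setoid β) :=
  Nat.card_congr ⟨comap e.symm, comap e, fun s => by ext; simp [comap_rel],
    fun s => by ext; simp [comap_rel]⟩

theorem natCard_eq_bellNumber [Fintype α] : Nat.card (Setoid α) = bellNumber (Fintype.card α) :=
  natCard_congr (Fintype.equivFin α)

theorem natCard_of_isEmpty [IsEmpty α] : Nat.card (Setoid α) = 1 :=
  Nat.card_eq_one_iff_unique.2 ⟨⟨fun s t => by ext a; exact isEmptyElim a⟩, ⟨⊥⟩⟩

open Classical in
noncomputable def blockOf [Fintype α] (s : Setoid α) (x : α) : Finset α := univ.filter (s x ·)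

theorem mem_blockOf [Fintype α] {s : Setoid α} {x y : α} : y ∈ s.blockOf x ↔ s x y := by
  simp [blockOf]

def extendByBlock (S : Finset α) (t : Setoid {u // u ∉ S}) : Setoid α where
  r a b := (a ∈ S ∧ b ∈ S) ∨ ∃ (ha : a ∉ S) (hb : b ∉ S), t ⟨a, ha⟩ ⟨b, hb⟩
  iseqv := by
    refine ⟨fun a => ?_, ?_, ?_⟩
    · by_cases h : a ∈ S
      · exact .inl ⟨h, h⟩
      · exact .inr ⟨h, h, t.refl _⟩
    · rintro a b (⟨ha, hb⟩ | ⟨ha, hb, h⟩)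
      · exact .inl ⟨hb, ha⟩
      · exact .inr ⟨hb, ha, t.symm h⟩
    · rintro a b c (⟨ha, hb⟩ | ⟨ha, hb, hab⟩) (⟨hb', hc⟩ | ⟨hb', hc, hbc⟩)
      · exact .inl ⟨ha, hc⟩
      · exact absurd hb hb'
      · exact absurd hb' hb
      · exact .inr ⟨ha, hc, t.trans hab hbc⟩

variable {S : Finset α}

theorem extendByBlock_rel {t : Setoid {u // u ∉ S}} {a b : α} :
    extendByBlock S t a b ↔
      (a ∈ S ∧ b ∈ S) ∨ ∃ (ha : a ∉ S) (hb : b ∉ S), t ⟨a, ha⟩ ⟨b, hb⟩ :=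
  Iff.rfl

theorem comap_extendByBlock (t : Setoid {u // u ∉ S}) :
    comap Subtype.val (extendByBlock S t) = t := by
  ext ⟨a, ha⟩ ⟨b, hb⟩
  simp [comap_rel, extendByBlock_rel, ha, hb]

variable [Fintype α] {x : α}

theorem blockOf_extendByBlock (hx : x ∈ S) (t : Setoid {u // u ∉ S}) :
    (extendByBlock S t).blockOf x = S := by
  ext y
  simp [mem_blockOf, extendByBlock_rel, hx]

theorem extendByBlock_comap {s : Setoid α} (hs : s.blockOf x = S) :
    extendByBlock S (comap Subtype.val s) = s := by
  have hS (y : α) : y ∈ S ↔ s x y := by rw [← hs, mem_blockOf]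
  ext a b
  simp only [extendByBlock_rel, comap_rel, hS]
  constructor
  · rintro (⟨ha, hb⟩ | ⟨-, -, h⟩)
    · exact s.trans (s.symm ha) hb
    · exact h
  · intro h
    by_cases ha : s x a
    · exact .inl ⟨ha, s.trans ha h⟩
    · exact .inr ⟨ha, fun hb => ha (s.trans hb (s.symm h)), h⟩

open Classical in
theorem natCard_eq_sum_compl (x : α) :
    Nat.card (Setoid α) =
      ∑ S ∈ univ.filter (fun S : Finset α => x ∈ S), Nat.card (Setoid {u // u ∉ S}) := by
  rw [Nat.card_congr (Equiv.sigmaFiberEquiv (blockOf · x)).symm, Nat.card_sigma,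
    ← sum_filter_of_ne (p := (x ∈ ·)) fun S _ hS => ?_]
  · refine sum_congr rfl fun S hS => Nat.card_congr ?_
    have hx : x ∈ S := (mem_filter.1 hS).2
    exact ⟨fun s => comap Subtype.val s.1,
      fun t => ⟨extendByBlock S t, blockOf_extendByBlock hx t⟩,
      fun s => Subtype.ext (extendByBlock_comap s.2), comap_extendByBlock⟩
  · obtain ⟨⟨s, rfl⟩⟩ := (Nat.card_ne_zero.1 hS).1
    exact mem_blockOf.2 (s.refl x)

end Setoid

theorem bellNumber_pos (m : ℕ) : 0 < bellNumber m := Nat.card_pos (α := Setoid (Fin m))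

namespace ParentMap

open Relation Finset

universe u

variable {α : Type u}

def Parent (p : α → Option α) (a b : α) : Prop := p a = some b

def IsForest (p : α → Option α) : Prop := ∀ v, ¬ TransGen (Parent p) v v

def IsTree (p : α → Option α) : Prop := IsForest p ∧ ∃! r, p r = none

noncomputable def hookLength (p : α → Option α) (v : α) : ℕ :=
  Nat.card {u : α // ReflTransGen (Parent p) u v}

noncomputable def hookWeight (p : α → Option α) (v : α) : ℚ :=
  1 / ((hookLength p v : ℚ) * (bellNumber (hookLength p v - 1) : ℚ))

noncomputable def weight [Fintype α] (p : α → Option α) : ℚ := ∏ v, hookWeight p v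

def ChildClosed (p : α → Option α) (P : α → Prop) : Prop :=
  ∀ a b, p a = some b → P b → P a

section Roots

variable {p : α → Option α}

theorem parent_rightUnique (p : α → Option α) : Relator.RightUnique (Parent p) :=
  fun _ _ _ hb hc => Option.some_injective _ (hb.symm.trans hc)

theorem eq_of_reflTransGen_of_eq_none {r z : α} (hr : p r = none)
    (h : ReflTransGen (Parent p) r z) : z = r := by
  rcases h.cases_head with rfl | ⟨c, hc, -⟩
  · rfl
  · exact absurd hc (by simp [Parent, hr])

theorem eq_of_reflTransGen_roots {u r s : α} (hur : ReflTransGen (Parent p) u r)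
    (hr : p r = none) (hus : ReflTransGen (Parent p) u s) (hs : p s = none) : r = s := by
  rcases hur.total_of_right_unique (parent_rightUnique p) hus with h | h
  · exact (eq_of_reflTransGen_of_eq_none hr h).symm
  · exact eq_of_reflTransGen_of_eq_none hs h

theorem IsForest.exists_root [Finite α] (hp : IsForest p) (u : α) :
    ∃ r, p r = none ∧ ReflTransGen (Parent p) u r := by
  have : IsTrans α (TransGen (flip (Parent p))) := ⟨fun _ _ _ => TransGen.trans⟩
  have : Std.Irrefl (TransGen (flip (Parent p))) :=
    ⟨fun v hv => hp v (transGen_swap.mp hv)⟩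
  have hwf : WellFounded (flip (Parent p)) :=
    (Finite.wellFounded_of_trans_of_irrefl _).mono fun _ _ => TransGen.single
  induction u using hwf.induction with
  | _ u ih =>
    rcases h : p u with _ | c
    · exact ⟨u, h, .refl⟩
    · obtain ⟨r, hr, hcr⟩ := ih c h
      exact ⟨r, hr, hcr.head h⟩

theorem IsTree.reflTransGen_root [Finite α] (hp : IsTree p) {r : α} (hr : p r = none)
    (u : α) : ReflTransGen (Parent p) u r := by
  obtain ⟨s, hs, hus⟩ := hp.1.exists_root u
  rwa [hp.2.unique hs hr] at hus

theorem IsTree.hookLength_root [Fintype α] (hp : IsTree p) {r : α} (hr : p r = none) :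
    hookLength p r = Fintype.card α := by
  rw [hookLength, Nat.card_congr (Equiv.subtypeUnivEquiv (hp.reflTransGen_root hr)),
    Nat.card_eq_fintype_card]

end Roots

section Restrict

variable {p : α → Option α} {P : α → Prop}

theorem ChildClosed.of_reflTransGen (hP : ChildClosed p P) {a b : α}
    (hab : ReflTransGen (Parent p) a b) (hb : P b) : P a := by
  induction hab using ReflTransGen.head_induction_on with
  | refl => exact hb
  | head hac _ ih => exact hP _ _ hac ih

theorem childClosed_ne_of_eq_none {r : α} (hr : p r = none) : ChildClosed p (· ≠ r) := by
  rintro a b hab - rfl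
  simp [hr] at hab

variable (p P) in
open Classical in
noncomputable def restrict : {v // P v} → Option {v // P v} :=
  fun v => (p v).bind fun a => if h : P a then some ⟨a, h⟩ else none

theorem restrict_eq_some_iff {b c : {v // P v}} : restrict p P b = some c ↔ p b = some c.1 := by
  rcases h : p b with _ | a
  · simp [restrict, h]
  · by_cases ha : P a
    · simp [restrict, h, ha, Subtype.ext_iff]
    · simpa [restrict, h, ha] using fun hac : a = c.1 => ha (hac ▸ c.2)

theorem restrict_eq_none_iff (hP : ChildClosed p (¬ P ·)) {b : {v // P v}} :
    restrict p P b = none ↔ p b = none := by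
  rcases h : p b with _ | a
  · simp [restrict, h]
  · have ha : P a := not_not.1 fun ha => hP _ _ h ha b.2
    simp [restrict, h, ha]

theorem reflTransGen_restrict_iff (hP : ChildClosed p P) {u v : {v // P v}} :
    ReflTransGen (Parent (restrict p P)) u v ↔ ReflTransGen (Parent p) u v := by
  refine ⟨fun h => ReflTransGen.lift _ (fun _ _ => restrict_eq_some_iff.1) _ _ h, fun h => ?_⟩
  obtain ⟨u, hu⟩ := u
  dsimp only at h
  induction h using ReflTransGen.head_induction_on with
  | refl => exact .refl
  | head huc hcv ih =>
    have hc := hP.of_reflTransGen hcv v.2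
    exact .head ((restrict_eq_some_iff (c := ⟨_, hc⟩)).2 huc) (ih hc)

theorem IsForest.restrict (hp : IsForest p) : IsForest (restrict p P) :=
  fun v hv => hp v (TransGen.lift _ (fun _ _ => restrict_eq_some_iff.1) _ _ hv)

theorem not_transGen_self_of_isForest_restrict (hP : ChildClosed p P)
    (hf : IsForest (restrict p P)) {v : α} (hv : P v) : ¬ TransGen (Parent p) v v := by
  intro hvv
  obtain ⟨c, hvc, hcv⟩ := TransGen.head'_iff.1 hvv
  have hc : P c := hP.of_reflTransGen hcv hv
  exact hf ⟨v, hv⟩ <| TransGen.head'_iff.2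
    ⟨⟨c, hc⟩, restrict_eq_some_iff.2 hvc, (reflTransGen_restrict_iff hP).2 hcv⟩

theorem hookLength_restrict (hP : ChildClosed p P) (v : {v // P v}) :
    hookLength (restrict p P) v = hookLength p v :=
  Nat.card_congr <| (Equiv.subtypeEquivRight fun _ => reflTransGen_restrict_iff hP).trans
    (Equiv.subtypeSubtypeEquivSubtype fun h => hP.of_reflTransGen h v.2)

theorem weight_restrict [Fintype α] [DecidablePred P] (hP : ChildClosed p P) :
    weight (restrict p P) = ∏ v : {v // P v}, hookWeight p v := by
  simp only [weight, hookWeight, hookLength_restrict hP]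

theorem weight_eq_mul_weight_restrict [Fintype α] [DecidablePred P] (hP : ChildClosed p P)
    (hP' : ChildClosed p (¬ P ·)) :
    weight p = weight (restrict p P) * weight (restrict p (¬ P ·)) := by
  rw [weight_restrict hP, weight_restrict hP', Fintype.prod_subtype_mul_prod_subtype, weight]

theorem weight_eq_hookWeight_mul_weight_restrict [Fintype α] [DecidableEq α] {r : α}
    (hr : p r = none) : weight p = hookWeight p r * weight (restrict p (· ≠ r)) := by
  rw [weight_restrict (childClosed_ne_of_eq_none hr), weight,
    ← mul_prod_erase _ _ (mem_univ r), prod_subtype (univ.erase r) (p := (· ≠ r)) (by simp)]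

end Restrict

section AddRoot

variable [DecidableEq α] {r : α}

variable (r) in
def addRoot (q : {v // v ≠ r} → Option {v // v ≠ r}) : α → Option α :=
  fun a => if h : a = r then none else some (((q ⟨a, h⟩).map Subtype.val).getD r)

variable {q : {v // v ≠ r} → Option {v // v ≠ r}}

theorem addRoot_self : addRoot r q r = none := dif_pos rfl

theorem addRoot_eq_some_iff {v c : {v // v ≠ r}} : addRoot r q v = some c.1 ↔ q v = some c := by
  rw [addRoot, dif_neg v.2]
  rcases q v with _ | b
  · simpa using fun h => c.2 h.symm
  · simp [Subtype.ext_iff]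

theorem restrict_addRoot : restrict (addRoot r q) (· ≠ r) = q :=
  funext fun _ => Option.ext fun _ => restrict_eq_some_iff.trans addRoot_eq_some_iff

theorem addRoot_restrict {p : α → Option α} (hp : IsTree p) (hr : p r = none) :
    addRoot r (restrict p (· ≠ r)) = p := by
  funext a
  by_cases ha : a = r
  · rw [ha, addRoot_self, hr]
  · obtain ⟨c, hc⟩ := Option.ne_none_iff_exists'.1 fun h => ha (hp.2.unique h hr)
    rw [addRoot, dif_neg ha, hc]
    by_cases hcr : c = r <;> simp [restrict, hc, hcr]

theorem IsForest.isTree_addRoot (hq : IsForest q) : IsTree (addRoot r q) := by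
  refine ⟨fun v hv => ?_, r, addRoot_self, fun a ha => ?_⟩
  · by_cases hvr : v = r
    · obtain ⟨c, hvc, -⟩ := TransGen.head'_iff.1 hv
      rw [hvr, Parent, addRoot_self] at hvc
      cases hvc
    · refine not_transGen_self_of_isForest_restrict (childClosed_ne_of_eq_none addRoot_self)
        ?_ hvr hv
      rwa [restrict_addRoot]
  · by_contra har
    simp [addRoot, har] at ha

end AddRoot

section Component

variable [Fintype α] {p : α → Option α} {x y : α}

open Classical in
/-- In a forest, the tree containing `x`. -/
noncomputable def component (p : α → Option α) (x : α) : Finset α :=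
  univ.filter fun u => ∃ w, ReflTransGen (Parent p) u w ∧ ReflTransGen (Parent p) x w

theorem mem_component :
    y ∈ component p x ↔ ∃ w, ReflTransGen (Parent p) y w ∧ ReflTransGen (Parent p) x w := by
  simp [component]

theorem self_mem_component : x ∈ component p x := mem_component.2 ⟨x, .refl, .refl⟩

theorem childClosed_mem_component : ChildClosed p (· ∈ component p x) := by
  intro a b hab hb
  obtain ⟨w, hbw, hxw⟩ := mem_component.1 hb
  exact mem_component.2 ⟨w, hbw.head hab, hxw⟩

theorem childClosed_not_mem_component : ChildClosed p (· ∉ component p x) := by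
  intro a b hab hb ha
  obtain ⟨w, haw, hxw⟩ := mem_component.1 ha
  refine hb (mem_component.2 ?_)
  rcases haw.cases_head with rfl | ⟨c, hac, hcw⟩
  · exact ⟨b, .refl, hxw.tail hab⟩
  · exact ⟨w, parent_rightUnique p hac hab ▸ hcw, hxw⟩

theorem isTree_restrict_component (hp : IsForest p) (x : α) :
    IsTree (restrict p (· ∈ component p x)) := by
  obtain ⟨r, hr, hxr⟩ := hp.exists_root x
  have hrx : r ∈ component p x := mem_component.2 ⟨r, .refl, hxr⟩
  have hroot {v : α} (hv : v ∈ component p x) :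
      restrict p (· ∈ component p x) ⟨v, hv⟩ = none ↔ p v = none :=
    restrict_eq_none_iff childClosed_not_mem_component
  refine ⟨hp.restrict, ⟨r, hrx⟩, (hroot hrx).2 hr, ?_⟩
  rintro ⟨v, hv⟩ hv'
  replace hv' := (hroot hv).1 hv'
  obtain ⟨w, hvw, hxw⟩ := mem_component.1 hv
  obtain rfl := eq_of_reflTransGen_of_eq_none hv' hvw
  exact Subtype.ext (eq_of_reflTransGen_roots hxw hv' hxr hr)

end Component

section Glue

variable {P : α → Prop} {t : {v // P v} → Option {v // P v}}
  {u : {v // ¬ P v} → Option {v // ¬ P v}}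

variable (P) in
open Classical in
noncomputable def glue (t : {v // P v} → Option {v // P v})
    (u : {v // ¬ P v} → Option {v // ¬ P v}) : α → Option α :=
  fun a => if h : P a then (t ⟨a, h⟩).map Subtype.val else (u ⟨a, h⟩).map Subtype.val

theorem glue_of_pos (v : {v // P v}) : glue P t u v = (t v).map Subtype.val := dif_pos v.2

theorem glue_of_neg (v : {v // ¬ P v}) : glue P t u v = (u v).map Subtype.val := dif_neg v.2

theorem childClosed_glue : ChildClosed (glue P t u) P := by
  intro a b hab hb
  by_contra ha
  rw [glue_of_neg (v := ⟨a, ha⟩), Option.map_eq_some_iff] at hab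
  obtain ⟨c, -, rfl⟩ := hab
  exact c.2 hb

theorem childClosed_not_glue : ChildClosed (glue P t u) (¬ P ·) := by
  intro a b hab hb ha
  rw [glue_of_pos (v := ⟨a, ha⟩), Option.map_eq_some_iff] at hab
  obtain ⟨c, -, rfl⟩ := hab
  exact hb c.2

theorem restrict_glue_left : restrict (glue P t u) P = t := by
  funext v
  refine Option.ext fun c => restrict_eq_some_iff.trans ?_
  rw [glue_of_pos, ← Option.map_some, (Option.map_injective Subtype.val_injective).eq_iff]

theorem restrict_glue_right : restrict (glue P t u) (¬ P ·) = u := by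
  funext v
  refine Option.ext fun c => restrict_eq_some_iff.trans ?_
  rw [glue_of_neg, ← Option.map_some, (Option.map_injective Subtype.val_injective).eq_iff]

theorem map_val_restrict {q : α → Option α} (hP : ChildClosed q (¬ P ·)) (v : {v // P v}) :
    (restrict q P v).map Subtype.val = q v := by
  rcases h : q v with _ | c
  · simp [restrict, h]
  · have hc : P c := not_not.1 fun hc => hP _ _ h hc v.2
    simp [restrict, h, hc]

theorem glue_restrict {q : α → Option α} (hP : ChildClosed q P)
    (hP' : ChildClosed q (¬ P ·)) :
    glue P (restrict q P) (restrict q (¬ P ·)) = q := by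
  funext a
  by_cases ha : P a
  · exact (glue_of_pos ⟨a, ha⟩).trans (map_val_restrict hP' ⟨a, ha⟩)
  · exact (glue_of_neg ⟨a, ha⟩).trans (map_val_restrict (by simpa using hP) ⟨a, ha⟩)

theorem IsForest.glue (ht : IsForest t) (hu : IsForest u) : IsForest (glue P t u) := by
  intro v
  by_cases hv : P v
  · exact not_transGen_self_of_isForest_restrict childClosed_glue
      (restrict_glue_left ▸ ht) hv
  · exact not_transGen_self_of_isForest_restrict childClosed_not_glue
      (restrict_glue_right ▸ hu) hv

theorem mem_component_glue [Fintype α] (ht : IsTree t) {x y : α} (hx : P x) :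
    y ∈ component (glue P t u) x ↔ P y := by
  constructor
  · intro hy
    obtain ⟨w, hyw, hxw⟩ := mem_component.1 hy
    have hw : P w := not_not.1 fun hw => childClosed_not_glue.of_reflTransGen hxw hw hx
    exact childClosed_glue.of_reflTransGen hyw hw
  · intro hy
    obtain ⟨r, hr, -⟩ := ht.2
    have hroot (v : {v // P v}) : ReflTransGen (Parent (glue P t u)) v r := by
      rw [← reflTransGen_restrict_iff childClosed_glue, restrict_glue_left]
      exact ht.reflTransGen_root hr v
    exact mem_component.2 ⟨r, hroot ⟨y, hy⟩, hroot ⟨x, hx⟩⟩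

end Glue

section Sums

open scoped Classical

variable (α) [Fintype α]

noncomputable def forestSum : ℚ := ∑ᶠ p : {p : α → Option α // IsForest p}, weight p.1

noncomputable def treeSum : ℚ := ∑ᶠ p : {p : α → Option α // IsTree p}, weight p.1

variable {α}

theorem forestSum_eq_sum :
    forestSum α = ∑ p ∈ univ.filter (IsForest (α := α)), weight p := by
  rw [forestSum, finsum_eq_sum_of_fintype]
  exact (sum_subtype _ (fun _ => by simp) _).symm

theorem treeSum_eq_sum : treeSum α = ∑ p ∈ univ.filter (IsTree (α := α)), weight p := by
  rw [treeSum, finsum_eq_sum_of_fintype]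
  exact (sum_subtype _ (fun _ => by simp) _).symm

theorem treeSum_eq_sum_root :
    treeSum α = ∑ r : α, ∑ p ∈ univ.filter (fun p => IsTree p ∧ p r = none), weight p := by
  calc treeSum α
      = ∑ p ∈ univ.filter IsTree, ∑ _r ∈ univ.filter (p · = none), weight p := by
        refine treeSum_eq_sum.trans (sum_congr rfl fun p hp => ?_)
        rw [sum_const, (Fintype.existsUnique_iff_card_one _).1 (mem_filter.1 hp).2.2, one_smul]
    _ = _ := sum_comm' fun p r => by simp [and_comm]

theorem sum_weight_isTree_root (r : α) :
    ∑ p ∈ univ.filter (fun p => IsTree p ∧ p r = none), weight p =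
      1 / (Fintype.card α * bellNumber (Fintype.card α - 1)) * forestSum {v // v ≠ r} := by
  rw [forestSum_eq_sum, mul_sum]
  refine sum_nbij' (restrict · (· ≠ r)) (addRoot r) ?_ ?_ ?_ ?_ ?_
  · intro p hp
    simpa using (mem_filter.1 hp).2.1.1.restrict
  · intro q hq
    simpa [addRoot_self] using (mem_filter.1 hq).2.isTree_addRoot
  · intro p hp
    exact addRoot_restrict (mem_filter.1 hp).2.1 (mem_filter.1 hp).2.2
  · intro q _
    exact restrict_addRoot
  · intro p hp
    obtain ⟨hp, hr⟩ := (mem_filter.1 hp).2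
    rw [weight_eq_hookWeight_mul_weight_restrict hr, hookWeight, hp.hookLength_root hr]

theorem forestSum_eq_sum_component (x : α) :
    forestSum α = ∑ S ∈ univ.filter (x ∈ ·),
      ∑ q ∈ univ.filter (fun q => IsForest q ∧ component q x = S), weight q := by
  rw [forestSum_eq_sum,
    ← sum_fiberwise_of_maps_to (t := univ.filter (x ∈ ·)) (g := (component · x))
    fun _ _ => mem_filter.2 ⟨mem_univ _, self_mem_component⟩]
  simp only [filter_filter]

theorem sum_weight_component {x : α} {S : Finset α} (hx : x ∈ S) :
    ∑ q ∈ univ.filter (fun q => IsForest q ∧ component q x = S), weight q =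
      treeSum {v // v ∈ S} * forestSum {v // v ∉ S} := by
  rw [treeSum_eq_sum, forestSum_eq_sum, sum_mul_sum, ← sum_product']
  refine sum_nbij' (fun q => (restrict q (· ∈ S), restrict q (· ∉ S)))
    (fun tu => glue (· ∈ S) tu.1 tu.2) ?_ ?_ ?_ ?_ ?_
  · rintro q hq
    obtain ⟨hf, rfl⟩ := (mem_filter.1 hq).2
    simpa using ⟨isTree_restrict_component hf x, hf.restrict⟩
  · rintro ⟨t, u⟩ htu
    simp only [mem_product, mem_filter, mem_univ, true_and] at htu ⊢
    exact ⟨htu.1.1.glue htu.2, Finset.ext fun y => mem_component_glue htu.1 hx⟩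
  · rintro q hq
    obtain ⟨-, rfl⟩ := (mem_filter.1 hq).2
    exact glue_restrict childClosed_mem_component childClosed_not_mem_component
  · rintro ⟨t, u⟩ -
    exact Prod.ext (restrict_glue_left (P := (· ∈ S))) (restrict_glue_right (P := (· ∈ S)))
  · rintro q hq
    obtain ⟨-, rfl⟩ := (mem_filter.1 hq).2
    dsimp only
    -- the two sides differ only in the `Fintype` instances of the subtypes
    convert weight_eq_mul_weight_restrict childClosed_mem_component childClosed_not_mem_component
      using 3

theorem forestSum_of_isEmpty [IsEmpty α] : forestSum α = 1 := by
  have hforest (p : α → Option α) : IsForest p := fun v => isEmptyElim v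
  simp [forestSum_eq_sum, weight, filter_true_of_mem fun p _ => hforest p]

theorem treeSum_eq_one_of_forestSum [Nonempty α]
    (h : ∀ (β : Type u) [Fintype β], Fintype.card β = Fintype.card α - 1 →
      forestSum β = Nat.card (Setoid β)) :
    treeSum α = 1 := by
  have hcard (r : α) : Fintype.card {v // v ≠ r} = Fintype.card α - 1 := by simp
  have hforest (r : α) : forestSum {v // v ≠ r} = bellNumber (Fintype.card α - 1) := by
    rw [h _ (hcard r), Setoid.natCard_eq_bellNumber, hcard]
  simp only [treeSum_eq_sum_root, sum_weight_isTree_root, hforest, sum_const, card_univ,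
    nsmul_eq_mul]
  have hN : (Fintype.card α : ℚ) ≠ 0 := mod_cast Fintype.card_ne_zero
  have hB : (bellNumber (Fintype.card α - 1) : ℚ) ≠ 0 := mod_cast (bellNumber_pos _).ne'
  field_simp

theorem forestSum_eq_natCard_setoid (α : Type u) [Fintype α] :
    forestSum α = Nat.card (Setoid α) := by
  induction hN : Fintype.card α using Nat.strong_induction_on generalizing α with
  | _ N ih =>
  rcases isEmpty_or_nonempty α with hα | ⟨⟨x⟩⟩
  · rw [forestSum_of_isEmpty, Setoid.natCard_of_isEmpty, Nat.cast_one]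
  rw [forestSum_eq_sum_component x, Setoid.natCard_eq_sum_compl x, Nat.cast_sum]
  refine sum_congr rfl fun S hS => ?_
  have hx : x ∈ S := (mem_filter.1 hS).2
  have : Nonempty {v // v ∈ S} := ⟨⟨x, hx⟩⟩
  have hS : Fintype.card {v // v ∈ S} ≤ N := hN ▸ Fintype.card_subtype_le _
  have hSc : Fintype.card {v // v ∉ S} < N := hN ▸ Fintype.card_subtype_lt (not_not.2 hx)
  have htree : treeSum {v // v ∈ S} = 1 := treeSum_eq_one_of_forestSum fun β _ hβ =>
    ih _ (by have := Fintype.card_pos (α := {v // v ∈ S}); omega) β hβ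
  rw [sum_weight_component hx, htree, one_mul, ih _ hSc _ rfl]

theorem treeSum_eq_one [Nonempty α] : treeSum α = 1 :=
  treeSum_eq_one_of_forestSum fun β _ _ => forestSum_eq_natCard_setoid β

end Sums

end ParentMap

/-- The Bell number hook length formula for labeled rooted trees. -/
theorem bell_hook_formula_labeled_trees (n : ℕ) (hn : 1 ≤ n) :
    ∑ᶠ p : {p : Fin n → Option (Fin n) // IsRTree p},
      ∏ v : Fin n,
        1 / ((hookLen (p : Fin n → Option (Fin n)) v : ℚ) *
          (bellNumber (hookLen (p : Fin n → Option (Fin n)) v - 1) : ℚ))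
    = 1 := by
  have : Nonempty (Fin n) := ⟨⟨0, hn⟩⟩
  -- `ParentMap.treeSum (Fin n)` unfolds to the left-hand side.
  exact ParentMap.treeSum_eq_one
end
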